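/- arXiv:1412.6016 — 6 statements merged into one kernel-verified Lean document; each statement's English description precedes it below -/
import Mathlib

section
/- Every walk in the graph G starting from the vertex root has length (number of edges) at most n + ⌈log₂ m⌉, this maximum length is attained, and every walk of length exactly n + ⌈log₂ m⌉ starting from root ends either at the vertex u_0^n or at the vertex v_0^n. -/
namespace GraphDB

/-- Vertices of the graph `G` produced by the SAT reduction.
`node k p` is the vertex of the binary tree at depth `k` and position `p`
(in heap-style ordering); in particular `node 0 0` is the root and, with
`d = ⌈log₂ m⌉`, the leaf `node d (i-1)` is the clause vertex `c_i`.
`u i j` and `v i j` are the vertices `u_i^j` and `v_i^j` (with `i = 0`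
giving `u_0^j`, `v_0^j`). -/
inductive Vtx : Type
  | node (k p : ℕ)
  | u (i j : ℕ)
  | v (i j : ℕ)
  deriving DecidableEq

/-- The edge relation of the graph `G` obtained from the SAT instance with
`n` variables `x_1, …, x_n` and `m` clauses `c_1, …, c_m`, where
`c i j = some true` means that the literal `x_j` occurs in clause `c_i`,
`c i j = some false` means that the literal `¬x_j` occurs in `c_i`, and
`c i j = none` means that the variable `x_j` does not occur in `c_i`. -/
def Edge (n m : ℕ) (c : ℕ → ℕ → Option Bool) : Vtx → Vtx → Prop := fun a b =>
  match a, b with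
  | .node k p, .node k' q =>
      k' = k + 1 ∧ k' ≤ Nat.clog 2 m ∧ (q = 2 * p ∨ q = 2 * p + 1) ∧
        q * 2 ^ (Nat.clog 2 m - k') < m
  | .node k p, .u i j => k = Nat.clog 2 m ∧ p < m ∧ i = p + 1 ∧ j = 1
  | .node k p, .v i j => k = Nat.clog 2 m ∧ p < m ∧ i = p + 1 ∧ j = 1
  | .u i j, .u i' j' =>
      j' = j + 1 ∧
        ((i = 0 ∧ i' = 0 ∧ 2 ≤ j ∧ j + 1 ≤ n) ∨
         (1 ≤ i ∧ i ≤ m ∧ i' = 0 ∧ 1 ≤ j ∧ j + 1 ≤ n ∧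
            (c i j = some true ∨ (j + 1 = n ∧ c i n = some true))) ∨
         (1 ≤ i ∧ i ≤ m ∧ i' = i ∧ 1 ≤ j ∧ j + 2 ≤ n ∧ c i j ≠ some true))
  | .u i j, .v i' j' =>
      j' = j + 1 ∧
        ((i = 0 ∧ i' = 0 ∧ 2 ≤ j ∧ j + 1 ≤ n) ∨
         (1 ≤ i ∧ i ≤ m ∧ i' = 0 ∧ 1 ≤ j ∧ j + 1 ≤ n ∧
            (c i j = some true ∨ (j + 1 = n ∧ c i n = some false))) ∨
         (1 ≤ i ∧ i ≤ m ∧ i' = i ∧ 1 ≤ j ∧ j + 2 ≤ n ∧ c i j ≠ some true))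
  | .v i j, .u i' j' =>
      j' = j + 1 ∧
        ((i = 0 ∧ i' = 0 ∧ 2 ≤ j ∧ j + 1 ≤ n) ∨
         (1 ≤ i ∧ i ≤ m ∧ i' = 0 ∧ 1 ≤ j ∧ j + 1 ≤ n ∧
            (c i j = some false ∨ (j + 1 = n ∧ c i n = some true))) ∨
         (1 ≤ i ∧ i ≤ m ∧ i' = i ∧ 1 ≤ j ∧ j + 2 ≤ n ∧ c i j ≠ some false))
  | .v i j, .v i' j' =>
      j' = j + 1 ∧
        ((i = 0 ∧ i' = 0 ∧ 2 ≤ j ∧ j + 1 ≤ n) ∨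
         (1 ≤ i ∧ i ≤ m ∧ i' = 0 ∧ 1 ≤ j ∧ j + 1 ≤ n ∧
            (c i j = some false ∨ (j + 1 = n ∧ c i n = some false))) ∨
         (1 ≤ i ∧ i ≤ m ∧ i' = i ∧ 1 ≤ j ∧ j + 2 ≤ n ∧ c i j ≠ some false))
  | _, _ => False

/-- The vertex labeling `ℓ` of `G`: the vertices `v_i^j` are labeled `0`
(`false`), all other vertices are labeled `1` (`true`). -/
def lab : Vtx → Bool
  | .v _ _ => false
  | _ => true

/-- The starting vertex `root` of `G`. -/
def root : Vtx := .node 0 0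

/-- `occG n m c a t` is `occ_a^G(t)`: the number of walks `w_1 w_2 … w_k`
in `G` with `w_1 = a` and `ℓ(w_j) = t_j` for all `j ∈ {1, …, k}`. -/
noncomputable def occG (n m : ℕ) (c : ℕ → ℕ → Option Bool) (a : Vtx) (t : List Bool) : ℕ :=
  Set.ncard {w : List Vtx | List.Chain' (Edge n m c) w ∧ w.head? = some a ∧ w.map lab = t}

end GraphDB

/-!
Give the tree vertex at depth `k` level `k` and `u_i^j`, `v_i^j` level `d + j`, where
`d = ⌈log₂ m⌉`. Every edge raises the level by one. The vertices reachable from `root` never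
include `u_i^n`, `v_i^n` with `i ≥ 1` (row `i` ends at column `n - 1`), so their level is at most
`n + d`, with equality only at `u_0^n` and `v_0^n`; this bounds every walk and pins down the end
of a longest one. A walk of length `n + d` descends the leftmost branch of the tree to `c_1`,
runs along row `1` up to the first variable `x_J` occurring in `c_1`, leaves that row through the
vertex whose label is the sign of this literal, and climbs row `0` up to column `n`.
-/

theorem List.IsChain.exists_getLast?_rank_eq {α : Type*} {r : α → α → Prop} {P : α → Prop}
    {f : α → ℕ} (hr : ∀ ⦃a b⦄, P a → r a b → P b ∧ f b = f a + 1) :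
    ∀ {a : α} {t : List α}, (a :: t).IsChain r → P a →
      ∃ x, (a :: t).getLast? = some x ∧ P x ∧ f x = f a + t.length
  | a, [], _, ha => ⟨a, rfl, ha, rfl⟩
  | a, b :: t, hl, ha => by
    obtain ⟨hb, hfb⟩ := hr ha (List.isChain_cons_cons.1 hl).1
    obtain ⟨x, hx, hPx, hfx⟩ := exists_getLast?_rank_eq hr hl.tail hb
    refine ⟨x, by rwa [List.getLast?_cons_cons], hPx, ?_⟩
    simp only [List.length_cons]
    omega

namespace GraphDB

/-- The vertex of row `i`, column `j` labelled `b`. For `i ≥ 1` it has edges into row `0` exactly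
when `c_i` contains `x_j` with sign `b`, which makes the edge cases uniform in the labels. -/
def Vtx.lit (b : Bool) (i j : ℕ) : Vtx := if b then .u i j else .v i j

def level (m : ℕ) : Vtx → ℕ
  | .node k _ => k
  | .u _ j | .v _ j => Nat.clog 2 m + j

def Valid (n m : ℕ) : Vtx → Prop
  | .node k _ => k ≤ Nat.clog 2 m
  | .u i j | .v i j => 1 ≤ j ∧ j ≤ n ∧ (j = n → i = 0)

variable {n m : ℕ} {c : ℕ → ℕ → Option Bool}

theorem Valid.of_edge (hn : 2 ≤ n) {a b : Vtx} (ha : Valid n m a) (h : Edge n m c a b) :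
    Valid n m b ∧ level m b = level m a + 1 := by
  cases a <;> cases b <;> simp only [Edge, Valid, level] at h ha ⊢ <;> omega

theorem Valid.level_le {a : Vtx} (ha : Valid n m a) : level m a ≤ n + Nat.clog 2 m := by
  cases a <;> simp only [Valid, level] at ha ⊢ <;> omega

theorem Valid.eq_top (hn : 0 < n) {a : Vtx} (ha : Valid n m a)
    (h : level m a = n + Nat.clog 2 m) : a = .u 0 n ∨ a = .v 0 n := by
  cases a <;> simp only [Valid, level, Vtx.u.injEq, Vtx.v.injEq, reduceCtorEq] at ha h ⊢ <;> omega

theorem edge_node_zero (hm : 1 ≤ m) {k : ℕ} (hk : k < Nat.clog 2 m) :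
    Edge n m c (.node k 0) (.node (k + 1) 0) :=
  ⟨rfl, hk, .inl rfl, by rwa [zero_mul]⟩

theorem edge_leaf (b : Bool) {p : ℕ} (hp : p < m) :
    Edge n m c (.node (Nat.clog 2 m) p) (.lit b (p + 1) 1) := by
  cases b <;> simp [Edge, Vtx.lit, hp]

theorem edge_lit_zero (b b' : Bool) {j : ℕ} (hj : 2 ≤ j) (hjn : j + 1 ≤ n) :
    Edge n m c (.lit b 0 j) (.lit b' 0 (j + 1)) := by
  cases b <;> cases b' <;> simp [Edge, Vtx.lit, hj, hjn]

theorem edge_lit_succ (b b' : Bool) {i j : ℕ} (hi : 1 ≤ i) (him : i ≤ m) (hj : 1 ≤ j)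
    (hjn : j + 2 ≤ n) (hc : c i j ≠ some b) :
    Edge n m c (.lit b i j) (.lit b' i (j + 1)) := by
  cases b <;> cases b' <;> simp_all [Edge, Vtx.lit]

theorem edge_lit_escape (b b' : Bool) {i j : ℕ} (hi : 1 ≤ i) (him : i ≤ m) (hj : 1 ≤ j)
    (hjn : j + 1 ≤ n) (hc : c i j = some b) :
    Edge n m c (.lit b i j) (.lit b' 0 (j + 1)) := by
  cases b <;> cases b' <;> simp_all [Edge, Vtx.lit]

theorem edge_lit_last (b b' : Bool) {i j : ℕ} (hi : 1 ≤ i) (him : i ≤ m) (hj : 1 ≤ j)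
    (hjn : j + 1 = n) (hc : c i n = some b') :
    Edge n m c (.lit b i j) (.lit b' 0 (j + 1)) := by
  cases b <;> cases b' <;> simp_all [Edge, Vtx.lit]

def trackVtx (n J : ℕ) (b : Bool) (j : ℕ) : Vtx :=
  .lit b (if j ≤ J ∧ j < n then 1 else 0) j

theorem edge_trackVtx (hm : 1 ≤ m) {J : ℕ} {b : Bool} (hJ : 1 ≤ J) (hJn : J ≤ n)
    (hcJ : c 1 J = some b) (hmin : ∀ j, 1 ≤ j → j < J → c 1 j = none) {j : ℕ}
    (hj : 1 ≤ j) (hjn : j + 1 ≤ n) :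
    Edge n m c (trackVtx n J b j) (trackVtx n J b (j + 1)) := by
  unfold trackVtx
  by_cases hrow : j ≤ J ∧ j < n
  · rw [if_pos hrow]
    by_cases hrow' : j + 1 ≤ J ∧ j + 1 < n
    · rw [if_pos hrow']
      exact edge_lit_succ b b le_rfl hm hj (by omega) (by simp [hmin j hj (by omega)])
    · rw [if_neg hrow']
      rcases eq_or_ne j J with rfl | hjJ
      · exact edge_lit_escape b b le_rfl hm hj hjn hcJ
      · obtain rfl : J = n := by omega
        exact edge_lit_last b b le_rfl hm hj (by omega) hcJ
  · rw [if_neg hrow, if_neg (by omega)]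
    exact edge_lit_zero b b (by omega) hjn

theorem exists_walk_length_eq (hn : 2 ≤ n) (hm : 1 ≤ m)
    (hc : ∃ j, 1 ≤ j ∧ j ≤ n ∧ c 1 j ≠ none) :
    ∃ w : List Vtx, w.IsChain (Edge n m c) ∧ w.head? = some root ∧
      w.length = n + Nat.clog 2 m + 1 := by
  obtain ⟨hJ, hJn, hcJ⟩ := Nat.find_spec hc
  obtain ⟨b, hb⟩ := Option.ne_none_iff_exists'.1 hcJ
  have hmin : ∀ j, 1 ≤ j → j < Nat.find hc → c 1 j = none := fun j hj hjJ => by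
    by_contra h
    exact Nat.find_min hc hjJ ⟨hj, by omega, h⟩
  refine ⟨(List.range (Nat.clog 2 m + 1)).map (fun k => .node k 0) ++
    (List.range n).map (fun j => trackVtx n (Nat.find hc) b (j + 1)), ?_, ?_, ?_⟩
  · refine List.IsChain.append ?_ ?_ ?_
    · rw [List.isChain_map, List.isChain_range_succ]
      exact fun k hk => edge_node_zero hm hk
    · rw [List.isChain_map, List.isChain_range]
      exact fun j hj => edge_trackVtx hm hJ hJn hb hmin (by omega) (by omega)
    · have htrack : trackVtx n (Nat.find hc) b 1 = .lit b 1 1 := by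
        rw [trackVtx, if_pos ⟨hJ, by omega⟩]
      simpa [List.getLast?_range, List.head?_range, show n ≠ 0 by omega, htrack] using
        edge_leaf (n := n) (c := c) b hm
  · simp [root, List.head?_range]
  · simp only [List.length_append, List.length_map, List.length_range]
    omega

/-- Lemma 1 of the paper: every walk in `G` starting at `root`
has at most `n + ⌈log₂ m⌉` edges (i.e. at most `n + ⌈log₂ m⌉ + 1` vertices),
this maximal length is attained, and every walk of exactly `n + ⌈log₂ m⌉`
edges starting at `root` ends at `u_0^n` or at `v_0^n`. -/
theorem longest_walk (n m : ℕ) (hn : 2 ≤ n) (hm : 1 ≤ m)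
    (c : ℕ → ℕ → Option Bool)
    (hne : ∀ i, 1 ≤ i → i ≤ m → ∃ j, 1 ≤ j ∧ j ≤ n ∧ c i j ≠ none) :
    (∀ w : List Vtx, List.Chain' (Edge n m c) w → w.head? = some root →
        w.length ≤ n + Nat.clog 2 m + 1) ∧
    (∃ w : List Vtx, List.Chain' (Edge n m c) w ∧ w.head? = some root ∧
        w.length = n + Nat.clog 2 m + 1) ∧
    (∀ w : List Vtx, List.Chain' (Edge n m c) w → w.head? = some root →
        w.length = n + Nat.clog 2 m + 1 →
        (w.getLast? = some (Vtx.u 0 n) ∨ w.getLast? = some (Vtx.v 0 n))) := by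
  have last_vertex : ∀ w : List Vtx, w.IsChain (Edge n m c) → w.head? = some root →
      ∃ x, w.getLast? = some x ∧ Valid n m x ∧ level m x + 1 = w.length := by
    intro w hw hroot
    obtain ⟨t, rfl⟩ := List.head?_eq_some_iff.1 hroot
    obtain ⟨x, hx, hvalid, hlevel⟩ := hw.exists_getLast?_rank_eq
      (fun _ _ ha h => Valid.of_edge hn ha h) (show Valid n m root from Nat.zero_le _)
    refine ⟨x, hx, hvalid, ?_⟩
    rw [hlevel, List.length_cons, show level m root = 0 from rfl, zero_add]
  refine ⟨fun w hw hroot => ?_, exists_walk_length_eq hn hm (hne 1 le_rfl hm),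
    fun w hw hroot hlen => ?_⟩
  · obtain ⟨x, -, hx, hlevel⟩ := last_vertex w hw hroot
    have := hx.level_le
    omega
  · obtain ⟨x, hlast, hx, hlevel⟩ := last_vertex w hw hroot
    rcases hx.eq_top (by omega) (by omega) with rfl | rfl
    · exact .inl hlast
    · exact .inr hlast

end GraphDB
end

section
/- Let s = s_0 s_1 … s_{n+⌈log₂ m⌉} and t = t_0 t_1 … t_{n+⌈log₂ m⌉} be two distinct walks in G of maximal length n + ⌈log₂ m⌉ starting from the vertex root. If ℓ(s_k) = ℓ(t_k) for every k ∈ {0,…,n+⌈log₂ m⌉}, then there exist i ≠ j in {1,…,m} such that s passes through the clause leaf c_i and t passes through the clause leaf c_j (i.e., s_{⌈log₂ m⌉} = c_i and t_{⌈log₂ m⌉} = c_j with i ≠ j). -/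
namespace GraphDB

def Good (m : ℕ) : Vtx → Prop
  | .node k _ => k = Nat.clog 2 m
  | _ => True

lemma branch_eq {nn mm ii jj i1 i2 : ℕ} {X : Option Bool} {b : Bool} {Y : Prop}
    (h1 : (ii = 0 ∧ i1 = 0 ∧ 2 ≤ jj ∧ jj + 1 ≤ nn) ∨
          (1 ≤ ii ∧ ii ≤ mm ∧ i1 = 0 ∧ 1 ≤ jj ∧ jj + 1 ≤ nn ∧ (X = some b ∨ (jj + 1 = nn ∧ Y))) ∨
          (1 ≤ ii ∧ ii ≤ mm ∧ i1 = ii ∧ 1 ≤ jj ∧ jj + 2 ≤ nn ∧ X ≠ some b))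
    (h2 : (ii = 0 ∧ i2 = 0 ∧ 2 ≤ jj ∧ jj + 1 ≤ nn) ∨
          (1 ≤ ii ∧ ii ≤ mm ∧ i2 = 0 ∧ 1 ≤ jj ∧ jj + 1 ≤ nn ∧ (X = some b ∨ (jj + 1 = nn ∧ Y))) ∨
          (1 ≤ ii ∧ ii ≤ mm ∧ i2 = ii ∧ 1 ≤ jj ∧ jj + 2 ≤ nn ∧ X ≠ some b)) :
    i1 = i2 := by
  rcases h1 with ⟨h,h1,_⟩|⟨_,_,h1,_,_,hA⟩|⟨_,_,h1,_,hj,hX⟩ <;>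
  rcases h2 with ⟨h',h2,_⟩|⟨_,_,h2,_,_,hA'⟩|⟨_,_,h2,_,hj',hX'⟩ <;>
    first
      | omega
      | (rcases hA with hA|⟨hA,_⟩
         · exact absurd hA hX'
         · omega)
      | (rcases hA' with hA'|⟨hA',_⟩
         · exact absurd hA' hX
         · omega)

lemma good_succ {n m : ℕ} {c : ℕ → ℕ → Option Bool} {a b : Vtx}
    (ha : Good m a) (h : Edge n m c a b) : Good m b := by
  cases a <;> cases b <;> simp only [Edge, Good] at * <;> try trivial
  omega

lemma succ_unique {n m : ℕ} {c : ℕ → ℕ → Option Bool} {w a b : Vtx}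
    (hw : Good m w) (ha : Edge n m c w a) (hb : Edge n m c w b)
    (hl : lab a = lab b) : a = b := by
  cases w with
  | node k p =>
    simp only [Good] at hw
    cases a with
    | node k1 p1 =>
      simp only [Edge] at ha
      omega
    | u i1 j1 =>
      cases b with
      | node k2 p2 => simp only [Edge] at hb; omega
      | u i2 j2 =>
        simp only [Edge] at ha hb
        obtain ⟨_, _, rfl, rfl⟩ := ha; obtain ⟨_, _, rfl, rfl⟩ := hb; rfl
      | v i2 j2 => exact absurd hl (by simp [lab])
    | v i1 j1 =>
      cases b with
      | node k2 p2 => simp only [Edge] at hb; omega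
      | u i2 j2 => exact absurd hl (by simp [lab])
      | v i2 j2 =>
        simp only [Edge] at ha hb
        obtain ⟨_, _, rfl, rfl⟩ := ha; obtain ⟨_, _, rfl, rfl⟩ := hb; rfl
  | u i j =>
    cases a with
    | node k1 p1 => simp only [Edge] at ha
    | u i1 j1 =>
      cases b with
      | node k2 p2 => simp only [Edge] at hb
      | u i2 j2 =>
        simp only [Edge] at ha hb
        obtain ⟨rfl, h1⟩ := ha; obtain ⟨rfl, h2⟩ := hb
        rw [branch_eq h1 h2]
      | v i2 j2 => exact absurd hl (by simp [lab])
    | v i1 j1 =>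
      cases b with
      | node k2 p2 => simp only [Edge] at hb
      | u i2 j2 => exact absurd hl (by simp [lab])
      | v i2 j2 =>
        simp only [Edge] at ha hb
        obtain ⟨rfl, h1⟩ := ha; obtain ⟨rfl, h2⟩ := hb
        rw [branch_eq h1 h2]
  | v i j =>
    cases a with
    | node k1 p1 => simp only [Edge] at ha
    | u i1 j1 =>
      cases b with
      | node k2 p2 => simp only [Edge] at hb
      | u i2 j2 =>
        simp only [Edge] at ha hb
        obtain ⟨rfl, h1⟩ := ha; obtain ⟨rfl, h2⟩ := hb
        rw [branch_eq h1 h2]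
      | v i2 j2 => exact absurd hl (by simp [lab])
    | v i1 j1 =>
      cases b with
      | node k2 p2 => simp only [Edge] at hb
      | u i2 j2 => exact absurd hl (by simp [lab])
      | v i2 j2 =>
        simp only [Edge] at ha hb
        obtain ⟨rfl, h1⟩ := ha; obtain ⟨rfl, h2⟩ := hb
        rw [branch_eq h1 h2]

lemma gec {α : Type*} (l : List α) {i j : ℕ} (h : i = j) (hi : i < l.length) :
    l[i]'hi = l[j]'(h ▸ hi) := by cases h; rfl

lemma walk_adj {n m : ℕ} {c : ℕ → ℕ → Option Bool} {s : List Vtx}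
    (hs : List.Chain' (Edge n m c) s) {k : ℕ} (h : k + 1 < s.length) :
    Edge n m c (s[k]'(by omega)) (s[k+1]'h) := by
  have := List.isChain_iff_getElem.mp hs k (by omega)
  simpa using this

lemma walk_shape {n m : ℕ} {c : ℕ → ℕ → Option Bool} {s : List Vtx}
    (hs : List.Chain' (Edge n m c) s) (hs0 : s.head? = some root) :
    ∀ k, k ≤ Nat.clog 2 m → ∀ h : k < s.length, ∃ p, s[k]'h = Vtx.node k p := by
  intro k
  induction k with
  | zero =>
    intro _ h
    refine ⟨0, ?_⟩
    have h1 : s[0]? = some root := by rw [← List.head?_eq_getElem?]; exact hs0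
    rw [List.getElem?_eq_getElem h] at h1
    exact Option.some_injective _ h1
  | succ k ih =>
    intro hk h
    obtain ⟨p, hp⟩ := ih (by omega) (by omega)
    have he := walk_adj hs (show k + 1 < s.length from h)
    rw [hp] at he
    cases hv : s[k+1]'h with
    | node k' q =>
      rw [hv] at he
      simp only [Edge] at he
      exact ⟨q, by rw [he.1]⟩
    | u i1 j1 =>
      rw [hv] at he
      simp only [Edge] at he
      omega
    | v i1 j1 =>
      rw [hv] at he
      simp only [Edge] at he
      omega

lemma walk_leaf {n m : ℕ} {c : ℕ → ℕ → Option Bool} {s : List Vtx}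
    (hs : List.Chain' (Edge n m c) s) (hs0 : s.head? = some root)
    (h : Nat.clog 2 m + 1 < s.length) :
    ∃ p, p < m ∧ s[Nat.clog 2 m]'(by omega) = Vtx.node (Nat.clog 2 m) p := by
  obtain ⟨p, hp⟩ := walk_shape hs hs0 _ le_rfl (by omega)
  refine ⟨p, ?_, hp⟩
  have he := walk_adj hs h
  rw [hp] at he
  cases hv : s[Nat.clog 2 m + 1]'h with
  | node k' q => rw [hv] at he; simp only [Edge] at he; omega
  | u i1 j1 => rw [hv] at he; simp only [Edge] at he; exact he.2.1
  | v i1 j1 => rw [hv] at he; simp only [Edge] at he; exact he.2.1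


/-- Lemma 2 of the paper: if `s` and `t` are two distinct
maximal-length walks in `G` starting from `root` (so each has
`n + ⌈log₂ m⌉ + 1` vertices) whose label sequences coincide, then there are
`i ≠ j` in `{1, …, m}` such that `s` passes through the clause leaf `c_i`
(the tree vertex `node (⌈log₂ m⌉) (i-1)`) and `t` passes through `c_j`. -/
theorem distinct_clauses_of_same_labels (n m : ℕ) (hn : 2 ≤ n) (hm : 1 ≤ m)
    (c : ℕ → ℕ → Option Bool)
    (hne : ∀ i, 1 ≤ i → i ≤ m → ∃ j, 1 ≤ j ∧ j ≤ n ∧ c i j ≠ none)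
    (s t : List Vtx)
    (hs : List.Chain' (Edge n m c) s) (hs0 : s.head? = some root)
    (hslen : s.length = n + Nat.clog 2 m + 1)
    (ht : List.Chain' (Edge n m c) t) (ht0 : t.head? = some root)
    (htlen : t.length = n + Nat.clog 2 m + 1)
    (hst : s ≠ t)
    (hlab : s.map lab = t.map lab) :
    ∃ i j, 1 ≤ i ∧ i ≤ m ∧ 1 ≤ j ∧ j ≤ m ∧ i ≠ j ∧
      s[Nat.clog 2 m]? = some (Vtx.node (Nat.clog 2 m) (i - 1)) ∧
      t[Nat.clog 2 m]? = some (Vtx.node (Nat.clog 2 m) (j - 1)) := by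
  have hd1 : Nat.clog 2 m + 1 < s.length := by omega
  have hd1' : Nat.clog 2 m + 1 < t.length := by omega
  obtain ⟨p, hpm, hsd⟩ := walk_leaf hs hs0 hd1
  obtain ⟨q, hqm, htd⟩ := walk_leaf ht ht0 hd1'
  have hlabk : ∀ k (h1 : k < s.length) (h2 : k < t.length),
      lab (s[k]'h1) = lab (t[k]'h2) := by
    intro k h1 h2
    have h3 : (s.map lab)[k]? = (t.map lab)[k]? := by rw [hlab]
    rw [List.getElem?_map, List.getElem?_map,
        List.getElem?_eq_getElem h1, List.getElem?_eq_getElem h2] at h3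
    simpa using h3
  have hpq : p ≠ q := by
    intro hpq
    apply hst
    have fwd : ∀ r, ∀ h : Nat.clog 2 m + r < s.length,
        s[Nat.clog 2 m + r]'h = t[Nat.clog 2 m + r]'(by omega) ∧
          Good m (s[Nat.clog 2 m + r]'h) := by
      intro r
      induction r with
      | zero =>
        intro h
        refine ⟨?_, ?_⟩
        · show s[Nat.clog 2 m]'(by omega) = t[Nat.clog 2 m]'(by omega)
          rw [hsd, htd, hpq]
        · show Good m (s[Nat.clog 2 m]'(by omega))
          rw [hsd]
          rfl
      | succ r ih =>
        intro h
        obtain ⟨heq, hg⟩ := ih (by omega)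
        have has := walk_adj hs (show Nat.clog 2 m + r + 1 < s.length by omega)
        have hat := walk_adj ht (show Nat.clog 2 m + r + 1 < t.length by omega)
        rw [← heq] at hat
        have key := succ_unique hg has hat (hlabk _ (by omega) (by omega))
        exact ⟨key, good_succ hg has⟩
    have bwd : ∀ r, r ≤ Nat.clog 2 m →
        s[Nat.clog 2 m - r]'(by omega) = t[Nat.clog 2 m - r]'(by omega) := by
      intro r
      induction r with
      | zero =>
        intro _
        exact (fwd 0 (by omega)).1
      | succ r ih =>
        intro hr
        have ihh := ih (by omega)
        obtain ⟨ps, hps⟩ := walk_shape hs hs0 (Nat.clog 2 m - (r+1)) (by omega) (by omega)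
        obtain ⟨pt, hpt⟩ := walk_shape ht ht0 (Nat.clog 2 m - (r+1)) (by omega) (by omega)
        obtain ⟨qs, hqs⟩ := walk_shape hs hs0 (Nat.clog 2 m - (r+1) + 1) (by omega) (by omega)
        obtain ⟨qt, hqt⟩ := walk_shape ht ht0 (Nat.clog 2 m - (r+1) + 1) (by omega) (by omega)
        have has := walk_adj hs (show Nat.clog 2 m - (r+1) + 1 < s.length by omega)
        have hat := walk_adj ht (show Nat.clog 2 m - (r+1) + 1 < t.length by omega)
        rw [hps, hqs] at has
        rw [hpt, hqt] at hat
        simp only [Edge] at has hat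
        -- s[k+1] = t[k+1]
        have e1 : s[Nat.clog 2 m - (r+1) + 1]'(by omega) = t[Nat.clog 2 m - (r+1) + 1]'(by omega) := by
          rw [gec s (show Nat.clog 2 m - (r+1) + 1 = Nat.clog 2 m - r by omega),
              gec t (show Nat.clog 2 m - (r+1) + 1 = Nat.clog 2 m - r by omega)]
          exact ihh
        rw [hqs, hqt] at e1
        have hq' : qs = qt := by injection e1
        have : ps = pt := by
          obtain ⟨-, -, h1, -⟩ := has
          obtain ⟨-, -, h2, -⟩ := hat
          omega
        rw [hps, hpt, this]
    refine List.ext_get (by omega) ?_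
    intro k h1 h2
    simp only [List.get_eq_getElem]
    by_cases hk : k ≤ Nat.clog 2 m
    · have hb := bwd (Nat.clog 2 m - k) (by omega)
      rw [gec s (show Nat.clog 2 m - (Nat.clog 2 m - k) = k by omega),
          gec t (show Nat.clog 2 m - (Nat.clog 2 m - k) = k by omega)] at hb
      exact hb
    · have hf := (fwd (k - Nat.clog 2 m) (by omega)).1
      rw [gec s (show Nat.clog 2 m + (k - Nat.clog 2 m) = k by omega),
          gec t (show Nat.clog 2 m + (k - Nat.clog 2 m) = k by omega)] at hf
      exact hf
  refine ⟨p + 1, q + 1, by omega, by omega, by omega, by omega, by omega, ?_, ?_⟩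
  · rw [List.getElem?_eq_getElem (by omega : Nat.clog 2 m < s.length), hsd]
    simp
  · rw [List.getElem?_eq_getElem (by omega : Nat.clog 2 m < t.length), htd]
    simp


end GraphDB
end

section
/- For every label sequence t ∈ {0,1}^{n+1+⌈log₂ m⌉}, the number of walks of G starting at root that realize t satisfies occ_root^G(t) ≤ m. -/
theorem List.IsChain.eq_of_map_eq {α β : Type*} {R : α → α → Prop} {P : α → Prop} {f : α → β}
    (hP : ∀ a b, R a b → P a → P b) (hdet : ∀ a x y, P a → R a x → R a y → f x = f y → x = y)
    {l₁ l₂ : List α} (h₁ : l₁.IsChain R) (h₂ : l₂.IsChain R) (hhead : l₁.head? = l₂.head?)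
    (hP₁ : ∀ a ∈ l₁.head?, P a) (hmap : l₁.map f = l₂.map f) : l₁ = l₂ := by
  induction l₁ generalizing l₂ with
  | nil => simpa [eq_comm] using hmap
  | cons a l₁ ih =>
    obtain _ | ⟨b, l₂⟩ := l₂
    · simp at hhead
    obtain rfl : a = b := by simpa using hhead
    have hPa : P a := hP₁ a rfl
    obtain _ | ⟨x, l₁⟩ := l₁ <;> obtain _ | ⟨y, l₂⟩ := l₂
    · rfl
    all_goals simp only [List.map_cons, List.map_nil, List.cons.injEq, reduceCtorEq, and_false]
      at hmap
    obtain ⟨hax, h₁⟩ := List.isChain_cons_cons.mp h₁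
    obtain ⟨hay, h₂⟩ := List.isChain_cons_cons.mp h₂
    obtain rfl := hdet a x y hPa hax hay hmap.2.1
    rw [ih h₁ h₂ rfl (by simpa using hP a x hax hPa) (by simp [hmap.2.2])]

namespace GraphDB

def Vtx.IsNode : Vtx → Prop
  | .node _ _ => True
  | _ => False

def Vtx.IsInner (d : ℕ) : Vtx → Prop
  | .node k _ => k < d
  | _ => False

section

variable {n m : ℕ} {c : ℕ → ℕ → Option Bool} {w w' : List Vtx}

lemma Edge.isNode_left {a b : Vtx} (h : Edge n m c a b) (hb : b.IsNode) : a.IsNode := by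
  cases a <;> cases b <;> simp_all [Edge, Vtx.IsNode]

lemma Edge.left_unique_of_isNode {x y b : Vtx} (hx : Edge n m c x b) (hy : Edge n m c y b)
    (hb : b.IsNode) : x = y := by
  cases b <;> cases x <;> cases y <;> simp [Edge, Vtx.IsNode] at hx hy hb ⊢; omega

lemma Edge.not_isInner {a b : Vtx} (h : Edge n m c a b) (ha : ¬ a.IsInner (Nat.clog 2 m)) :
    ¬ b.IsInner (Nat.clog 2 m) := by
  cases a <;> cases b <;> simp [Edge, Vtx.IsInner] at h ha ⊢; omega

/-- A leaf `c_i` has the two successors `u_i^1`, `v_i^1`; the edges out of `u_i^j` (resp. `v_i^j`)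
either all lead to level `0` (when `x_j` (resp. `¬x_j`) occurs in `c_i`, or `j = n - 1`) or all
stay in gadget `i`. -/
lemma Edge.right_unique_of_lab_eq {a x y : Vtx} (ha : ¬ a.IsInner (Nat.clog 2 m))
    (hx : Edge n m c a x) (hy : Edge n m c a y) (hl : lab x = lab y) : x = y := by
  cases a <;> cases x <;> cases y <;> simp_all [Edge, Vtx.IsInner, lab] <;> grind


lemma getElem_eq_node_of_head?_eq_root (hm : 1 ≤ m) (hw : w.IsChain (Edge n m c))
    (h0 : w.head? = some root) {k : ℕ} (hk : k ≤ Nat.clog 2 m) (hkw : k < w.length) :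
    ∃ p, p * 2 ^ (Nat.clog 2 m - k) < m ∧ w[k] = .node k p := by
  induction k with
  | zero =>
    refine ⟨0, by rwa [zero_mul], ?_⟩
    simpa [List.head?_eq_getElem?, List.getElem?_eq_getElem hkw, root] using h0
  | succ k ih =>
    obtain ⟨p, -, hp⟩ := ih (by omega) (by omega)
    have hedge := List.isChain_iff_getElem.mp hw k hkw
    rw [hp] at hedge
    cases hx : w[k + 1] with
    | node k' q =>
      rw [hx] at hedge
      obtain ⟨rfl, -, -, hq⟩ := hedge
      exact ⟨q, hq, rfl⟩
    | u i j => rw [hx] at hedge; exact absurd hedge.1 (by omega)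
    | v i j => rw [hx] at hedge; exact absurd hedge.1 (by omega)

lemma eq_of_map_lab_eq_of_getElem?_eq_node (hw : w.IsChain (Edge n m c))
    (hw' : w'.IsChain (Edge n m c)) (hlab : w.map lab = w'.map lab) {p : ℕ}
    (hwp : w[Nat.clog 2 m]? = some (.node (Nat.clog 2 m) p))
    (hwp' : w'[Nat.clog 2 m]? = some (.node (Nat.clog 2 m) p)) : w = w' := by
  have hprefix : w.take (Nat.clog 2 m + 1) = w'.take (Nat.clog 2 m + 1) := by
    refine List.reverse_injective <| List.IsChain.eq_of_map_eq (R := fun a b => Edge n m c b a)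
      (P := Vtx.IsNode) (f := lab) (fun _ _ h hb => h.isNode_left hb)
      (fun _ _ _ ha hx hy _ => hx.left_unique_of_isNode hy ha)
      (List.isChain_reverse.mpr (hw.take _)) (List.isChain_reverse.mpr (hw'.take _))
      (by simp [List.getLast?_take, hwp, hwp']) ?_ (by simp [List.map_take, hlab])
    simp [List.getLast?_take, hwp, Vtx.IsNode]
  have hsuffix : w.drop (Nat.clog 2 m) = w'.drop (Nat.clog 2 m) := by
    refine List.IsChain.eq_of_map_eq (R := Edge n m c) (P := fun a => ¬ a.IsInner (Nat.clog 2 m))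
      (f := lab) (fun _ _ h ha => h.not_isInner ha)
      (fun _ _ _ ha hx hy => Edge.right_unique_of_lab_eq ha hx hy)
      (hw.drop _) (hw'.drop _) (by simp [hwp, hwp']) ?_ (by simp [List.map_drop, hlab])
    simp [hwp, Vtx.IsInner]
  have htake : w.take (Nat.clog 2 m) = w'.take (Nat.clog 2 m) := by
    have := congrArg (List.take (Nat.clog 2 m)) hprefix
    rwa [List.take_take, List.take_take, min_eq_left (Nat.le_succ _)] at this
  rw [← List.take_append_drop (Nat.clog 2 m) w, ← List.take_append_drop (Nat.clog 2 m) w', htake,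
    hsuffix]

end

theorem occ_le_m_general (n m : ℕ) (hm : 1 ≤ m)
    (c : ℕ → ℕ → Option Bool) :
    ∀ t : List Bool, t.length = n + 1 + Nat.clog 2 m → occG n m c root t ≤ m := by
  intro t ht
  set d := Nat.clog 2 m
  set S := {w : List Vtx | List.IsChain (Edge n m c) w ∧ w.head? = some root ∧ w.map lab = t}
  set leaves : Finset (Option Vtx) := (Finset.range m).image fun p => some (.node d p)
  have hleaf : ∀ w ∈ S, ∃ p < m, w[d]? = some (.node d p) := by
    rintro w ⟨hw, h0, hwt⟩
    have hd : d < w.length := by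
      have := congrArg List.length hwt
      simp only [List.length_map] at this
      omega
    obtain ⟨p, hp, hwp⟩ := getElem_eq_node_of_head?_eq_root hm hw h0 le_rfl hd
    exact ⟨p, by simpa using hp, by rw [List.getElem?_eq_getElem hd, hwp]⟩
  have hinj : Set.InjOn (fun w : List Vtx => w[d]?) S := by
    intro w hw w' hw' hww'
    obtain ⟨p, -, hwp⟩ := hleaf w hw
    have hwp' : w'[d]? = some (.node d p) := hww'.symm.trans hwp
    exact eq_of_map_lab_eq_of_getElem?_eq_node hw.1 hw'.1 (hw.2.2.trans hw'.2.2.symm) hwp hwp'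
  have hmaps : ∀ w ∈ S, w[d]? ∈ (leaves : Set (Option Vtx)) := by
    intro w hw
    obtain ⟨p, hp, hwp⟩ := hleaf w hw
    simpa [leaves, hwp] using hp
  calc occG n m c root t = S.ncard := rfl
    _ ≤ (leaves : Set (Option Vtx)).ncard := Set.ncard_le_ncard_of_injOn _ hmaps hinj
    _ ≤ m := by
      rw [Set.ncard_coe_finset]
      exact Finset.card_image_le.trans (Finset.card_range m).le

/-- for every label sequence `t ∈ {0,1}^{n+1+⌈log₂ m⌉}`, the
number of walks of `G` starting at `root` realizing `t` satisfies
`occ_root^G(t) ≤ m`. -/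
theorem occ_le_m (n m : ℕ) (hn : 2 ≤ n) (hm : 1 ≤ m)
    (c : ℕ → ℕ → Option Bool)
    (hne : ∀ i, 1 ≤ i → i ≤ m → ∃ j, 1 ≤ j ∧ j ≤ n ∧ c i j ≠ none) :
    ∀ t : List Bool, t.length = n + 1 + Nat.clog 2 m → occG n m c root t ≤ m :=
  occ_le_m_general n m hm c

end GraphDB
end

section
/- Suppose the assignment (y_1,…,y_n) ∈ {0,1}^n satisfies every clause c_1(x),…,c_m(x). Then the sequence consisting of ⌈log₂ m⌉ + 1 ones followed by y_1 y_2 … y_n occurs exactly m times among walks of G starting at root, i.e. occ_root^G(1^{⌈log₂ m⌉+1} y_1 … y_n) = m. -/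
/-!
A walk from `root` can only descend the tree, so after `⌈log₂ m⌉ + 1` vertices it sits at a leaf
`c_{q+1}` with `q < m`. Every tree vertex has a unique parent, and below the leaves every
out-neighbourhood contains at most one vertex of each label, so a walk spelling the given word is
determined by its leaf. Conversely, for every clause the word is spelled by the walk that follows
the clause's row of the gadget while `y` satisfies none of its literals and drops to row `0` at
the first satisfied one (if that is the literal of `x_n`, by the direct edge to `u_0^n` or `v_0^n`).
-/

namespace List

theorem eq_of_isChain_cons_of_deterministic {α β : Type*} {R : α → α → Prop} {f : α → β}
    {S : Set α} (hS : ∀ x ∈ S, ∀ y, R x y → y ∈ S)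
    (hdet : ∀ x ∈ S, ∀ y z, R x y → R x z → f y = f z → y = z) {a : α} (ha : a ∈ S)
    {l l' : List α} (hl : IsChain R (a :: l)) (hl' : IsChain R (a :: l'))
    (hf : l.map f = l'.map f) : l = l' := by
  induction l generalizing a l' with
  | nil => exact (map_eq_nil_iff.1 hf.symm).symm
  | cons x l ih =>
    obtain _ | ⟨x', l'⟩ := l'
    · simp at hf
    rw [map_cons, map_cons, cons.injEq] at hf
    rw [isChain_cons_cons] at hl hl'
    obtain rfl := hdet a ha x x' hl.1 hl'.1 hf.1
    rw [ih (hS a ha x hl.1) hl.2 hl'.2 hf.2]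

theorem IsChain.cons_of_append {α : Type*} {R : α → α → Prop} {l₁ l₂ : List α} {a : α}
    (h : IsChain R (l₁ ++ l₂)) (ha : l₁.getLast? = some a) : IsChain R (a :: l₂) := by
  obtain ⟨-, h₂, hlink⟩ := isChain_append.1 h
  exact h₂.cons (hlink a ha)

end List

namespace GraphDB

open List

def uv : Bool → ℕ → ℕ → Vtx
  | true, s, j => .u s j
  | false, s, j => .v s j

@[simp]
lemma lab_uv (b : Bool) (s j : ℕ) : lab (uv b s j) = b := by
  cases b <;> rfl

lemma Vtx.eq_node_or_eq_uv (x : Vtx) : (∃ k p, x = .node k p) ∨ ∃ b s j, x = uv b s j := by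
  cases x with
  | node k p => exact .inl ⟨k, p, rfl⟩
  | u s j => exact .inr ⟨true, s, j, rfl⟩
  | v s j => exact .inr ⟨false, s, j, rfl⟩

section

variable {n m : ℕ} {c : ℕ → ℕ → Option Bool}

lemma edge_node_node {k p k' q : ℕ} :
    Edge n m c (.node k p) (.node k' q) ↔ k' = k + 1 ∧ k' ≤ Nat.clog 2 m ∧
      (q = 2 * p ∨ q = 2 * p + 1) ∧ q * 2 ^ (Nat.clog 2 m - k') < m :=
  Iff.rfl

lemma edge_node_uv {k p : ℕ} {b : Bool} {s j : ℕ} :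
    Edge n m c (.node k p) (uv b s j) ↔ k = Nat.clog 2 m ∧ p < m ∧ s = p + 1 ∧ j = 1 := by
  cases b <;> rfl

lemma not_edge_uv_node {b : Bool} {s j k p : ℕ} : ¬ Edge n m c (uv b s j) (.node k p) := by
  cases b <;> exact id

lemma edge_uv_uv {b b' : Bool} {s j s' j' : ℕ} :
    Edge n m c (uv b s j) (uv b' s' j') ↔ j' = j + 1 ∧
      ((s = 0 ∧ s' = 0 ∧ 2 ≤ j ∧ j + 1 ≤ n) ∨
       (1 ≤ s ∧ s ≤ m ∧ s' = 0 ∧ 1 ≤ j ∧ j + 1 ≤ n ∧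
          (c s j = some b ∨ (j + 1 = n ∧ c s n = some b'))) ∨
       (1 ≤ s ∧ s ≤ m ∧ s' = s ∧ 1 ≤ j ∧ j + 2 ≤ n ∧ c s j ≠ some b)) := by
  cases b <;> cases b' <;> rfl

lemma eq_of_edge_uv {b : Bool} {s j : ℕ} {x x' : Vtx} (h : Edge n m c (uv b s j) x)
    (h' : Edge n m c (uv b s j) x') (hlab : lab x = lab x') : x = x' := by
  obtain ⟨k, p, rfl⟩ | ⟨b₁, s₁, j₁, rfl⟩ := x.eq_node_or_eq_uv
  · exact absurd h not_edge_uv_node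
  obtain ⟨k, p, rfl⟩ | ⟨b₂, s₂, j₂, rfl⟩ := x'.eq_node_or_eq_uv
  · exact absurd h' not_edge_uv_node
  rw [lab_uv, lab_uv] at hlab
  subst hlab
  obtain ⟨rfl, h⟩ := edge_uv_uv.1 h
  obtain ⟨rfl, h'⟩ := edge_uv_uv.1 h'
  grind

lemma not_edge_node_node_of_le {k p k' q : ℕ} (hk : Nat.clog 2 m ≤ k) :
    ¬ Edge n m c (.node k p) (.node k' q) := by
  rw [edge_node_node]
  omega

lemma eq_of_edge_leaf {k p : ℕ} {x x' : Vtx} (hk : Nat.clog 2 m ≤ k)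
    (h : Edge n m c (.node k p) x) (h' : Edge n m c (.node k p) x') (hlab : lab x = lab x') :
    x = x' := by
  obtain ⟨k₁, p₁, rfl⟩ | ⟨b₁, s₁, j₁, rfl⟩ := x.eq_node_or_eq_uv
  · exact absurd h (not_edge_node_node_of_le hk)
  obtain ⟨k₂, p₂, rfl⟩ | ⟨b₂, s₂, j₂, rfl⟩ := x'.eq_node_or_eq_uv
  · exact absurd h' (not_edge_node_node_of_le hk)
  rw [lab_uv, lab_uv] at hlab
  obtain ⟨-, -, rfl, rfl⟩ := edge_node_uv.1 h
  obtain ⟨-, -, rfl, rfl⟩ := edge_node_uv.1 h'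
  rw [hlab]

lemma eq_node_of_edge_node {k q : ℕ} {x : Vtx} (h : Edge n m c x (.node k q)) :
    x = .node (k - 1) (q / 2) := by
  obtain ⟨k', p, rfl⟩ | ⟨b, s, j, rfl⟩ := x.eq_node_or_eq_uv
  · obtain ⟨rfl, -, hq, -⟩ := edge_node_node.1 h
    rw [Vtx.node.injEq]
    omega
  · exact absurd h not_edge_uv_node

lemma eq_of_isChain_cons_leaf {q : ℕ} {l l' : List Vtx}
    (h : IsChain (Edge n m c) (.node (Nat.clog 2 m) q :: l))
    (h' : IsChain (Edge n m c) (.node (Nat.clog 2 m) q :: l'))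
    (hlab : l.map lab = l'.map lab) : l = l' := by
  refine eq_of_isChain_cons_of_deterministic (S := {x | ∀ k p, x = .node k p → Nat.clog 2 m ≤ k})
    ?_ ?_ (by simp) h h' hlab
  · rintro x hx y hxy k' p' rfl
    obtain ⟨k, p, rfl⟩ | ⟨b, s, j, rfl⟩ := x.eq_node_or_eq_uv
    · exact absurd hxy (not_edge_node_node_of_le (hx k p rfl))
    · exact absurd hxy not_edge_uv_node
  · rintro x hx y z hy hz hlab
    obtain ⟨k, p, rfl⟩ | ⟨b, s, j, rfl⟩ := x.eq_node_or_eq_uv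
    · exact eq_of_edge_leaf (hx k p rfl) hy hz hlab
    · exact eq_of_edge_uv hy hz hlab

/- Read backwards, walks into the tree are deterministic: every tree vertex has a unique
in-neighbour. -/
lemma eq_of_isChain_of_getLast?_eq_node {k q : ℕ} {l l' : List Vtx} (h : IsChain (Edge n m c) l)
    (h' : IsChain (Edge n m c) l') (hlast : l.getLast? = some (.node k q))
    (hlast' : l'.getLast? = some (.node k q)) (hlab : l.map lab = l'.map lab) : l = l' := by
  rw [← head?_reverse, head?_eq_some_iff] at hlast hlast'
  obtain ⟨r, hr⟩ := hlast
  obtain ⟨r', hr'⟩ := hlast'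
  have hlab_rev := congrArg reverse hlab
  rw [← map_reverse, ← map_reverse, hr, hr', map_cons, map_cons, cons.injEq] at hlab_rev
  rw [← isChain_reverse, hr] at h
  rw [← isChain_reverse, hr'] at h'
  rw [← reverse_inj, hr, hr', eq_of_isChain_cons_of_deterministic (S := {x | ∃ k p, x = .node k p})
    ?_ ?_ ⟨k, q, rfl⟩ h h' hlab_rev.2]
  · rintro _ ⟨k, p, rfl⟩ y hy
    exact ⟨_, _, eq_node_of_edge_node hy⟩
  · rintro _ ⟨k, p, rfl⟩ y z hy hz -
    rw [eq_node_of_edge_node hy, eq_node_of_edge_node hz]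

lemma exists_getLast?_eq_node {k p : ℕ} {l : List Vtx} (h : IsChain (Edge n m c) (.node k p :: l))
    (hl : k + l.length ≤ Nat.clog 2 m) :
    ∃ q, (Vtx.node k p :: l).getLast? = some (.node (k + l.length) q) := by
  induction l generalizing k p with
  | nil => exact ⟨p, rfl⟩
  | cons x l ih =>
    rw [isChain_cons_cons] at h
    obtain ⟨k', p', rfl⟩ | ⟨b, s, j, rfl⟩ := x.eq_node_or_eq_uv
    · obtain ⟨rfl, -⟩ := edge_node_node.1 h.1
      obtain ⟨q, hq⟩ := ih h.2 (by simp only [length_cons] at hl; omega)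
      refine ⟨q, ?_⟩
      rw [getLast?_cons_cons, hq, length_cons, ← add_assoc, add_right_comm]
    · have hk := (edge_node_uv.1 h.1).1
      simp only [length_cons] at hl
      omega

def treeWalk (m q : ℕ) : List Vtx :=
  (range (Nat.clog 2 m + 1)).map fun k => .node k (q / 2 ^ (Nat.clog 2 m - k))

lemma isChain_treeWalk {q : ℕ} (hq : q < m) : IsChain (Edge n m c) (treeWalk m q) := by
  rw [treeWalk, isChain_map, isChain_range_succ]
  intro k hk
  rw [Nat.succ_eq_add_one, edge_node_node]
  have hdiv : q / 2 ^ (Nat.clog 2 m - k) = q / 2 ^ (Nat.clog 2 m - (k + 1)) / 2 := by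
    rw [Nat.div_div_eq_div_mul, ← pow_succ]
    congr 2
    omega
  exact ⟨rfl, hk, by omega, (Nat.div_mul_le_self _ _).trans_lt hq⟩

lemma head?_treeWalk {q : ℕ} (hq : q < m) : (treeWalk m q).head? = some root := by
  simp [treeWalk, head?_range, Nat.div_eq_of_lt (hq.trans_le (Nat.le_pow_clog one_lt_two m)), root]

lemma getLast?_treeWalk (m q : ℕ) : (treeWalk m q).getLast? = some (.node (Nat.clog 2 m) q) := by
  simp [treeWalk, getLast?_range]

lemma map_lab_treeWalk (m q : ℕ) :
    (treeWalk m q).map lab = replicate (Nat.clog 2 m + 1) true := by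
  simp [treeWalk, Function.comp_def, lab]

variable {y : ℕ → Bool} {i : ℕ}

/- The row (`i` or `0`) in which the walk for clause `c_i` visits level `j`: it stays in row `i`
until the first literal satisfied by `y`, and level `n` exists only in row `0`. -/
def gadgetRow (n : ℕ) (c : ℕ → ℕ → Option Bool) (y : ℕ → Bool) (i j : ℕ) : ℕ :=
  if n ≤ j ∨ ∃ j' < j, 1 ≤ j' ∧ c i j' = some (y j') then 0 else i

def gadgetWalk (n : ℕ) (c : ℕ → ℕ → Option Bool) (y : ℕ → Bool) (i : ℕ) : List Vtx :=
  (range' 1 n).map fun j => uv (y j) (gadgetRow n c y i j) j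

lemma edge_gadgetRow (hi : 1 ≤ i ∧ i ≤ m) (hsat : ∃ j, 1 ≤ j ∧ j ≤ n ∧ c i j = some (y j))
    {j : ℕ} (hj : 1 ≤ j) (hjn : j + 1 ≤ n) :
    Edge n m c (uv (y j) (gadgetRow n c y i j) j)
      (uv (y (j + 1)) (gadgetRow n c y i (j + 1)) (j + 1)) := by
  rw [edge_uv_uv]
  refine ⟨rfl, ?_⟩
  unfold gadgetRow
  split_ifs with hrow hrow'
  · grind
  · grind
  · refine .inr (.inl ⟨hi.1, hi.2, rfl, hj, hjn, ?_⟩)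
    by_cases hcj : c i j = some (y j)
    · exact .inl hcj
    -- otherwise no literal of `c_i` up to `x_j` is satisfied, so the one satisfied is `x_n`
    have hjn' : j + 1 = n := by grind
    obtain ⟨j₀, hj₀, hj₀n, hcj₀⟩ := hsat
    obtain rfl : j₀ = n := by grind
    exact .inr ⟨hjn', by rwa [hjn']⟩
  · grind

lemma isChain_gadgetWalk (hi : 1 ≤ i ∧ i ≤ m) (hsat : ∃ j, 1 ≤ j ∧ j ≤ n ∧ c i j = some (y j)) :
    IsChain (Edge n m c) (gadgetWalk n c y i) := by
  rw [gadgetWalk, isChain_map]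
  refine (isChain_range' 1 n 1).imp_of_mem_imp fun j j' hj hj' hjj' => ?_
  rw [mem_range'_1] at hj hj'
  subst hjj'
  exact edge_gadgetRow hi hsat hj.1 (by omega)

lemma head?_gadgetWalk (hn : 2 ≤ n) : (gadgetWalk n c y i).head? = some (uv (y 1) i 1) := by
  simp [gadgetWalk, head?_range', gadgetRow, show ¬n ≤ 1 by omega, show n ≠ 0 by omega]

lemma map_lab_gadgetWalk (n : ℕ) (c : ℕ → ℕ → Option Bool) (y : ℕ → Bool) (i : ℕ) :
    (gadgetWalk n c y i).map lab = (range' 1 n).map y := by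
  simp [gadgetWalk, Function.comp_def]

def canonicalWalk (n m : ℕ) (c : ℕ → ℕ → Option Bool) (y : ℕ → Bool) (q : ℕ) : List Vtx :=
  treeWalk m q ++ gadgetWalk n c y (q + 1)

lemma isChain_canonicalWalk (hn : 2 ≤ n) {q : ℕ} (hq : q < m)
    (hsat : ∃ j, 1 ≤ j ∧ j ≤ n ∧ c (q + 1) j = some (y j)) :
    IsChain (Edge n m c) (canonicalWalk n m c y q) := by
  refine (isChain_treeWalk hq).append (isChain_gadgetWalk ⟨by omega, hq⟩ hsat) ?_
  rw [getLast?_treeWalk, head?_gadgetWalk hn]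
  rintro _ ⟨⟩ _ ⟨⟩
  exact edge_node_uv.2 ⟨rfl, hq, rfl, rfl⟩

lemma canonicalWalk_injective (n m : ℕ) (c : ℕ → ℕ → Option Bool) (y : ℕ → Bool) :
    Function.Injective (canonicalWalk n m c y) := by
  intro q q' h
  have htree := congrArg getLast? (append_inj_left h (by simp [treeWalk]))
  simpa [getLast?_treeWalk] using htree

lemma exists_eq_canonicalWalk (hn : 2 ≤ n)
    (hsat : ∀ q < m, ∃ j, 1 ≤ j ∧ j ≤ n ∧ c (q + 1) j = some (y j)) {w : List Vtx}
    (hw : IsChain (Edge n m c) w) (hhead : w.head? = some root)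
    (hlab : w.map lab = replicate (Nat.clog 2 m + 1) true ++ (range' 1 n).map y) :
    ∃ q < m, w = canonicalWalk n m c y q := by
  obtain ⟨l₁, l₂, rfl, hlab₁, hlab₂⟩ := map_eq_append_iff.1 hlab
  have hlen₁ := congrArg length hlab₁
  have hlen₂ := congrArg length hlab₂
  simp only [length_map, length_replicate, length_range'] at hlen₁ hlen₂
  obtain _ | ⟨a, t⟩ := l₁
  · simp at hlen₁
  obtain rfl : a = root := by simpa using hhead
  obtain _ | ⟨x, l₂⟩ := l₂
  · simp only [length_nil] at hlen₂
    omega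
  obtain ⟨hw₁, -, hlink⟩ := isChain_append.1 hw
  rw [length_cons, Nat.add_right_cancel_iff] at hlen₁
  obtain ⟨q, hq⟩ := exists_getLast?_eq_node hw₁ (by omega)
  rw [zero_add, hlen₁] at hq
  have hqm : q < m := by
    obtain ⟨k, p, rfl⟩ | ⟨b, s, j, rfl⟩ := x.eq_node_or_eq_uv
    · exact absurd (hlink _ hq _ rfl) (not_edge_node_node_of_le le_rfl)
    · exact (edge_node_uv.1 (hlink _ hq _ rfl)).2.1
  have hcan := isChain_canonicalWalk (c := c) hn hqm (hsat q hqm)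
  refine ⟨q, hqm, ?_⟩
  rw [canonicalWalk]
  congr 1
  · exact eq_of_isChain_of_getLast?_eq_node hw₁ (isChain_treeWalk hqm) hq (getLast?_treeWalk m q)
      (by rw [hlab₁, map_lab_treeWalk])
  · exact eq_of_isChain_cons_leaf (hw.cons_of_append hq)
      (hcan.cons_of_append (getLast?_treeWalk m q)) (by rw [hlab₂, map_lab_gadgetWalk])

end

theorem occ_of_satisfying_assignment_general (n m : ℕ) (hn : 2 ≤ n)
    (c : ℕ → ℕ → Option Bool)
    (y : ℕ → Bool)
    (hy : ∀ i, 1 ≤ i → i ≤ m → ∃ j, 1 ≤ j ∧ j ≤ n ∧ c i j = some (y j)) :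
    occG n m c root
      (List.replicate (Nat.clog 2 m + 1) true ++ (List.range' 1 n).map y) = m := by
  have hsat : ∀ q < m, ∃ j, 1 ≤ j ∧ j ≤ n ∧ c (q + 1) j = some (y j) :=
    fun q hq => hy (q + 1) (by omega) hq
  have hwalks : {w : List Vtx | List.Chain' (Edge n m c) w ∧ w.head? = some root ∧
      w.map lab = List.replicate (Nat.clog 2 m + 1) true ++ (List.range' 1 n).map y} =
      canonicalWalk n m c y '' Set.Iio m := by
    ext w
    constructor
    · rintro ⟨hw, hhead, hlab⟩
      obtain ⟨q, hq, rfl⟩ := exists_eq_canonicalWalk hn hsat hw hhead hlab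
      exact ⟨q, hq, rfl⟩
    · rintro ⟨q, hq, rfl⟩
      exact ⟨isChain_canonicalWalk hn hq (hsat q hq),
        by rw [canonicalWalk, head?_append, head?_treeWalk hq]; rfl,
        by rw [canonicalWalk, map_append, map_lab_treeWalk, map_lab_gadgetWalk]⟩
  rw [occG, hwalks, Set.ncard_image_of_injective _ (canonicalWalk_injective n m c y),
    Set.ncard_Iio_nat]

/-- if the assignment `(y_1, …, y_n) ∈ {0,1}^n` satisfies every
clause `c_1(x), …, c_m(x)`, then the sequence `1^{⌈log₂ m⌉+1} y_1 y_2 … y_n`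
occurs exactly `m` times among walks of `G` starting at `root`. -/
theorem occ_of_satisfying_assignment (n m : ℕ) (hn : 2 ≤ n) (hm : 1 ≤ m)
    (c : ℕ → ℕ → Option Bool)
    (hne : ∀ i, 1 ≤ i → i ≤ m → ∃ j, 1 ≤ j ∧ j ≤ n ∧ c i j ≠ none)
    (y : ℕ → Bool)
    (hy : ∀ i, 1 ≤ i → i ≤ m → ∃ j, 1 ≤ j ∧ j ≤ n ∧ c i j = some (y j)) :
    occG n m c root
      (List.replicate (Nat.clog 2 m + 1) true ++ (List.range' 1 n).map y) = m :=
  occ_of_satisfying_assignment_general n m hn c y hy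

end GraphDB
end

section
/- Let n ≥ 2, m ≥ 1, and let ℓ be any {0,1}-labeling of T^m_n. Let V_0 (resp. V_1) be the set of children of the root labeled 0 (resp. 1), and let X (resp. Y) be the labeled tree whose root is labeled 0 (resp. 1) and whose children are the 2|V_0| (resp. 2|V_1|) labeled subtrees rooted at the children of the vertices of V_0 (resp. V_1), with labeling inherited from ℓ. Then X is a labeled copy of T^{|V_0|}_{n−1}, Y is a labeled copy of T^{|V_1|}_{n−1}, and max over t ∈ {0,1}^{n+1} of occ(ℓ, t) in T^m_n equals max( max over t' ∈ {0,1}^n of occ(t') in X, max over t' ∈ {0,1}^n of occ(t') in Y ). -/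
namespace TreeDB

/-- The sample space of `{0,1}`-labelings of the tree `T^m_n` (the rooted
tree whose root has `2m` children, each of which is the root of a full
binary tree of depth `n-1`): a labeling consists of the label of the root
together with, for each of the `2m` children, a labeling of the full binary
tree of depth `n-1` rooted at that child.  That binary tree has `2^n - 1`
vertices, stored in heap order: the vertex with heap index `h ∈ [1, 2^n - 1]`
(root `1`, children of `h` being `2h` and `2h+1`) is stored at position
`h - 1`. -/
abbrev Ω (m n : ℕ) : Type := Bool × (Fin (2 * m) → Fin (2 ^ n - 1) → Bool)

/-- The heap index of the vertex of a full binary tree reached from the root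
by the descent `p` (`false` = left, `true` = right). -/
def heapIdx (p : List Bool) : ℕ := p.foldl (fun h b => 2 * h + b.toNat) 1

/-- The label of the vertex with heap index `h` in a heap-stored labeled
full binary tree `g`. -/
def sub {N : ℕ} (g : Fin N → Bool) (h : ℕ) : Bool :=
  if hh : h - 1 < N then g ⟨h - 1, hh⟩ else false

/-- The sequence of the `n` labels read along the first `n` vertices of the
root-to-leaf path of the heap-stored labeled full binary tree `g`
determined by the descent `p`. -/
def pathLabels {N : ℕ} (n : ℕ) (g : Fin N → Bool) (p : List Bool) : List Bool :=
  (List.range n).map fun j => sub g (heapIdx (p.take j))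

/-- `occ ℓ t` is the number of root-to-leaf paths `w_0 w_1 … w_n` of `T^m_n`
with `ℓ(w_j) = t_j` for all `j`, for a labeling `ℓ` of `T^m_n` and a
sequence `t = t_0 t_1 … t_n ∈ {0,1}^{n+1}`.  A root-to-leaf path consists of
the root, a child `i` of the root, and a descent `p ∈ {0,1}^{n-1}` in the
full binary tree of depth `n-1` rooted at that child. -/
def occ {m n : ℕ} (ℓ : Ω m n) (t : List Bool) : ℕ :=
  match t with
  | [] => 0
  | t0 :: ts =>
      if ℓ.1 = t0 then
        ∑ i : Fin (2 * m), ∑ p : Fin (n - 1) → Bool,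
          if pathLabels n (ℓ.2 i) (List.ofFn p) = ts then 1 else 0
      else 0

/-- The random variable `M^m_n`: the maximum over `t ∈ {0,1}^{n+1}` of
`occ ℓ t`. -/
def Mval {m n : ℕ} (ℓ : Ω m n) : ℕ :=
  Finset.univ.sup fun t : Fin (n + 1) → Bool => occ ℓ (List.ofFn t)

/-- The probability of the event `P` under the uniform distribution over
`{0,1}`-labelings of `T^m_n`. -/
def Pr (m n : ℕ) (P : Ω m n → Prop) [DecidablePred P] : ℚ :=
  ((Finset.univ.filter P).card : ℚ) / (Fintype.card (Ω m n) : ℚ)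

/-- The expectation of `f` under the uniform distribution over
`{0,1}`-labelings of `T^m_n`. -/
def Exp (m n : ℕ) (f : Ω m n → ℕ) : ℚ :=
  (∑ ℓ : Ω m n, (f ℓ : ℚ)) / (Fintype.card (Ω m n) : ℚ)

/-- The labeled full binary tree of depth `n - 2` rooted at the left
(`s = false`) or right (`s = true`) child of the root of the heap-stored
labeled full binary tree `g` of depth `n - 1`. -/
def childSub {n : ℕ} (g : Fin (2 ^ n - 1) → Bool) (s : Bool) :
    Fin (2 ^ (n - 1) - 1) → Bool :=
  fun h => sub g ((h.val + 1) + (1 + s.toNat) * 2 ^ Nat.log2 (h.val + 1))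

end TreeDB

/-!
A root-to-leaf path of `T^m_n` reading `t₀ t₁ ts` exists only if `t₀` is the root label, and it
then passes through a child labeled `t₁`, after which it is a path reading `ts` in one of the two
subtrees hanging below that child. So `occ ℓ (t₀ :: t₁ :: ts)` is `0` or the number of `ts`-paths
in the subtrees below the children labeled `t₁`; the tree `X` (for `t₁ = 0`) or `Y` (for `t₁ = 1`)
has exactly these subtrees below a root labeled `t₁`, so the same number is `occ X (t₁ :: ts)` or
`occ Y (t₁ :: ts)`. Maximising over `t₁` and `ts` gives the theorem. The only computation is that
`childSub` agrees with the heap layout: the heap index of the descent `s :: q` is that of `q`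
shifted by `(1 + s) · 2 ^ |q|`.
-/

open Finset

lemma Finset.sup_univ_fin_succ {α β : Type*} [Fintype α] [SemilatticeSup β] [OrderBot β] {k : ℕ}
    (f : (Fin (k + 1) → α) → β) :
    univ.sup f = univ.sup fun a => univ.sup fun t => f (Fin.cons a t) := by
  refine le_antisymm (Finset.sup_le fun t _ => ?_)
    (Finset.sup_le fun a _ => Finset.sup_le fun t _ => le_sup (mem_univ _))
  rw [← Fin.cons_self_tail t]
  exact le_sup_of_le (mem_univ (t 0)) (le_sup (f := fun t' => f (Fin.cons (t 0) t')) (mem_univ _))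

lemma Finset.exists_fin_map_eq_product_bool {ι β : Type*} (s : Finset ι) (F : ι × Bool → β) :
    ∃ f : Fin (2 * s.card) → β, univ.val.map f = (s ×ˢ univ).val.map F := by
  set M := (s ×ˢ univ).val.map F
  have hM : M.toList.length = 2 * s.card := by simp [M, two_mul]
  refine ⟨fun i => M.toList.get (i.cast hM.symm), ?_⟩
  rw [Fin.univ_val_map, ← List.ofFn_congr hM, List.ofFn_get, Multiset.coe_toList]

namespace TreeDB

lemma foldl_double_add (h : ℕ) (q : List Bool) :
    q.foldl (fun h b => 2 * h + b.toNat) h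
      = h * 2 ^ q.length + q.foldl (fun h b => 2 * h + b.toNat) 0 := by
  induction q generalizing h with
  | nil => simp
  | cons b q ih =>
    rw [List.foldl_cons, List.foldl_cons, ih, ih (2 * 0 + b.toNat), List.length_cons]
    ring

lemma heapIdx_cons (b : Bool) (q : List Bool) :
    heapIdx (b :: q) = heapIdx q + (1 + b.toNat) * 2 ^ q.length := by
  unfold heapIdx
  rw [List.foldl_cons, foldl_double_add, foldl_double_add 1]
  cases b <;> simp <;> ring

lemma heapIdx_mem_Ico (q : List Bool) :
    heapIdx q ∈ Set.Ico (2 ^ q.length) (2 ^ (q.length + 1)) := by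
  induction q with
  | nil => simp [heapIdx]
  | cons b q ih =>
    obtain ⟨h1, h2⟩ := ih
    rw [heapIdx_cons, List.length_cons, pow_succ, pow_succ]
    constructor <;> cases b <;> simp <;> omega

lemma log2_heapIdx (q : List Bool) : Nat.log2 (heapIdx q) = q.length := by
  obtain ⟨h1, h2⟩ := heapIdx_mem_Ico q
  rw [Nat.log2_eq_log_two]
  exact Nat.log_eq_of_pow_le_of_lt_pow h1 h2

lemma sub_childSub {k : ℕ} (g : Fin (2 ^ (k + 2) - 1) → Bool) (s : Bool) {q : List Bool}
    (hq : q.length ≤ k) :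
    sub (childSub g s) (heapIdx q) = sub g (heapIdx (s :: q)) := by
  obtain ⟨h1, h2⟩ := heapIdx_mem_Ico q
  have hpos : 1 ≤ heapIdx q := Nat.one_le_two_pow.trans h1
  have hpow : 2 ^ (q.length + 1) ≤ 2 ^ (k + 2 - 1) := Nat.pow_le_pow_right two_pos (by omega)
  have hlt : heapIdx q - 1 < 2 ^ (k + 2 - 1) - 1 := by omega
  have hsucc : heapIdx q - 1 + 1 = heapIdx q := Nat.sub_add_cancel hpos
  rw [sub, dif_pos hlt, childSub, hsucc, log2_heapIdx, heapIdx_cons]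

lemma pathLabels_cons {k : ℕ} (g : Fin (2 ^ (k + 2) - 1) → Bool) (s : Bool) (q : List Bool) :
    pathLabels (k + 2) g (s :: q) = sub g 1 :: pathLabels (k + 1) (childSub g s) q := by
  rw [pathLabels, List.range_succ_eq_map, List.map_cons, List.map_map]
  congr 1
  refine List.map_congr_left fun j hj => ?_
  rw [Function.comp_apply, List.take_succ_cons,
    sub_childSub g s ((List.length_take_le _ _).trans (by simpa using hj))]

def pathCount {N : ℕ} (n : ℕ) (g : Fin N → Bool) (ts : List Bool) : ℕ :=
  ∑ p : Fin (n - 1) → Bool, if pathLabels n g (List.ofFn p) = ts then 1 else 0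

lemma occ_cons {m n : ℕ} (ℓ : Ω m n) (t : Bool) (ts : List Bool) :
    occ ℓ (t :: ts) = if ℓ.1 = t then ∑ i, pathCount n (ℓ.2 i) ts else 0 :=
  rfl

lemma pathCount_cons {k : ℕ} (g : Fin (2 ^ (k + 2) - 1) → Bool) (b : Bool) (ts : List Bool) :
    pathCount (k + 2) g (b :: ts) =
      if sub g 1 = b then ∑ s, pathCount (k + 1) (childSub g s) ts else 0 := by
  change ∑ p : Fin (k + 1) → Bool, _ = _
  rw [← (Fin.consEquiv fun _ => Bool).sum_comp, Fintype.sum_prod_type]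
  simp only [Fin.consEquiv, Equiv.coe_fn_mk, List.ofFn_cons, pathLabels_cons, List.cons.injEq,
    ite_and, sum_ite_irrel, sum_const_zero]
  rfl

/-- Paths reading `ts` in the subtrees rooted at the grandchildren of the root of `ℓ` that lie
below a child labeled `b`. -/
def grandchildPathCount {m k : ℕ} (ℓ : Ω m (k + 2)) (b : Bool) (ts : List Bool) : ℕ :=
  ∑ is ∈ (univ.filter fun i : Fin (2 * m) => sub (ℓ.2 i) 1 = b) ×ˢ univ,
    pathCount (k + 1) (childSub (ℓ.2 is.1) is.2) ts

lemma occ_cons_cons {m k : ℕ} (ℓ : Ω m (k + 2)) (t₀ t₁ : Bool) (ts : List Bool) :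
    occ ℓ (t₀ :: t₁ :: ts) = if ℓ.1 = t₀ then grandchildPathCount ℓ t₁ ts else 0 := by
  simp only [occ_cons, pathCount_cons, grandchildPathCount, sum_product, sum_filter]

lemma occ_cons_of_map_eq {c n : ℕ} {ι : Type*} (X : Ω c n) {s : Finset ι}
    {F : ι → Fin (2 ^ n - 1) → Bool} (hX : univ.val.map X.2 = s.val.map F)
    (t : Bool) (ts : List Bool) :
    occ X (t :: ts) = if X.1 = t then ∑ x ∈ s, pathCount n (F x) ts else 0 := by
  have hsum := congrArg (fun M => (M.map fun g => pathCount n g ts).sum) hX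
  simp only [Multiset.map_map, Function.comp_def, sum_map_val] at hsum
  rw [occ_cons, hsum]

lemma mval_eq_sup_of_occ_cons {m n : ℕ} (ℓ : Ω m n) (F : (Fin n → Bool) → ℕ)
    (hF : ∀ t ts, occ ℓ (t :: List.ofFn ts) = if ℓ.1 = t then F ts else 0) :
    Mval ℓ = univ.sup F := by
  rw [Mval, sup_univ_fin_succ]
  simp only [List.ofFn_cons, hF, Fintype.univ_bool]
  cases ℓ.1 <;> simp

theorem mval_eq_max_subtrees_general (m n : ℕ) (hn : 2 ≤ n) (ℓ : Ω m n) :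
    ∃ (X : Ω ((Finset.univ.filter fun i : Fin (2 * m) =>
          sub (ℓ.2 i) 1 = false).card) (n - 1))
      (Y : Ω ((Finset.univ.filter fun i : Fin (2 * m) =>
          sub (ℓ.2 i) 1 = true).card) (n - 1)),
      X.1 = false ∧ Y.1 = true ∧
      (Finset.univ.val.map X.2 =
        ((Finset.univ.filter fun i : Fin (2 * m) => sub (ℓ.2 i) 1 = false) ×ˢ
            (Finset.univ : Finset Bool)).val.map
          fun is => childSub (ℓ.2 is.1) is.2) ∧
      (Finset.univ.val.map Y.2 =
        ((Finset.univ.filter fun i : Fin (2 * m) => sub (ℓ.2 i) 1 = true) ×ˢ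
            (Finset.univ : Finset Bool)).val.map
          fun is => childSub (ℓ.2 is.1) is.2) ∧
      Mval ℓ = max (Mval X) (Mval Y) := by
  obtain ⟨k, rfl⟩ : ∃ k, n = k + 2 := ⟨n - 2, by omega⟩
  obtain ⟨f₀, hf₀⟩ := Finset.exists_fin_map_eq_product_bool _ fun is => childSub (ℓ.2 is.1) is.2
  obtain ⟨f₁, hf₁⟩ := Finset.exists_fin_map_eq_product_bool _ fun is => childSub (ℓ.2 is.1) is.2
  refine ⟨(false, f₀), (true, f₁), rfl, rfl, hf₀, hf₁, ?_⟩
  have hX : Mval ((false, f₀) : Ω _ (k + 1)) =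
      univ.sup fun ts => grandchildPathCount ℓ false (List.ofFn ts) :=
    mval_eq_sup_of_occ_cons _ _ fun t ts => occ_cons_of_map_eq _ hf₀ t _
  have hY : Mval ((true, f₁) : Ω _ (k + 1)) =
      univ.sup fun ts => grandchildPathCount ℓ true (List.ofFn ts) :=
    mval_eq_sup_of_occ_cons _ _ fun t ts => occ_cons_of_map_eq _ hf₁ t _
  rw [mval_eq_sup_of_occ_cons ℓ (fun ts => grandchildPathCount ℓ (ts 0) (List.ofFn (Fin.tail ts)))
      fun t ts => by rw [List.ofFn_succ, occ_cons_cons]; rfl,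
    sup_univ_fin_succ, hX, hY]
  simp only [Fin.cons_zero, Fin.tail_cons, Fintype.univ_bool, sup_insert, sup_singleton]
  exact sup_comm _ _

/-- let `n ≥ 2`, `m ≥ 1`, and let `ℓ` be a `{0,1}`-labeling of
`T^m_n`.  Let `V_0` (resp. `V_1`) be the set of children of the root labeled
`0` (resp. `1`).  Then there is a labeled copy `X` of `T^{|V_0|}_{n-1}`
whose root is labeled `0` and whose `2|V_0|` subtrees are exactly (as a
multiset) the labeled subtrees rooted at the children of the vertices of
`V_0`, a labeled copy `Y` of `T^{|V_1|}_{n-1}` whose root is labeled `1` and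
whose `2|V_1|` subtrees are exactly the labeled subtrees rooted at the
children of the vertices of `V_1`, and
`max_{t ∈ {0,1}^{n+1}} occ(ℓ, t) = max (max_{t' ∈ {0,1}^n} occ(X, t'),
max_{t' ∈ {0,1}^n} occ(Y, t'))`. -/
theorem mval_eq_max_subtrees (m n : ℕ) (hn : 2 ≤ n) (hm : 1 ≤ m) (ℓ : Ω m n) :
    ∃ (X : Ω ((Finset.univ.filter fun i : Fin (2 * m) =>
          sub (ℓ.2 i) 1 = false).card) (n - 1))
      (Y : Ω ((Finset.univ.filter fun i : Fin (2 * m) =>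
          sub (ℓ.2 i) 1 = true).card) (n - 1)),
      X.1 = false ∧ Y.1 = true ∧
      (Finset.univ.val.map X.2 =
        ((Finset.univ.filter fun i : Fin (2 * m) => sub (ℓ.2 i) 1 = false) ×ˢ
            (Finset.univ : Finset Bool)).val.map
          fun is => childSub (ℓ.2 is.1) is.2) ∧
      (Finset.univ.val.map Y.2 =
        ((Finset.univ.filter fun i : Fin (2 * m) => sub (ℓ.2 i) 1 = true) ×ˢ
            (Finset.univ : Finset Bool)).val.map
          fun is => childSub (ℓ.2 is.1) is.2) ∧
      Mval ℓ = max (Mval X) (Mval Y) :=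
  mval_eq_max_subtrees_general m n hn ℓ

end TreeDB
end

section
/- Let m ≥ 1 and consider the uniform distribution over {0,1}-labelings of T^m_1. Then for every integer x: Pr(M^m_1 < x) = 0 if x ≤ m; Pr(M^m_1 < x) = (C(2m, m) + 2·∑_{i=m+1}^{x−1} C(2m, i)) / 2^{2m} if m < x ≤ 2m + 1; and Pr(M^m_1 < x) = 1 if x > 2m + 1. -/
namespace TreeDB

/-! In `T^m_1` a root-to-leaf path is the root followed by one of its `2m` children, so
`M^m_1 = max(c, 2m - c)` where `c` is the number of children labelled `true`. Hence
`m ≤ M^m_1 ≤ 2m`, and `M^m_1 < x` exactly when `c` lies in the window `[2m + 1 - x, x)`.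
Since `c` is binomially distributed, the probability is the sum of `C(2m, k) / 2^(2m)` over that
window, which folds about its centre `m` by `C(2m, k) = C(2m, 2m - k)`. -/

open Finset

section WeightCount

variable {α : Type*} [Fintype α] (Q : ℕ → Prop) [DecidablePred Q]

theorem card_filter_card_eq_sum_choose :
    #{s : Finset α | Q #s} =
      ∑ k ∈ range (Fintype.card α + 1) with Q k, (Fintype.card α).choose k := by
  rw [card_filter, ← powerset_univ, sum_powerset_apply_card (fun k => if Q k then 1 else 0),
    sum_filter, card_univ]
  simp only [smul_eq_mul, mul_ite, mul_one, mul_zero]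

theorem card_filter_card_true_eq_sum_choose [DecidableEq α] :
    #{f : α → Bool | Q #{i | f i = true}} =
      ∑ k ∈ range (Fintype.card α + 1) with Q k, (Fintype.card α).choose k := by
  rw [← card_filter_card_eq_sum_choose]
  refine card_nbij' (fun f => ({i | f i = true} : Finset α)) (fun s i => decide (i ∈ s))
    ?_ ?_ ?_ ?_
  · intro f hf
    simpa using hf
  · intro s hs
    simpa using hs
  · intro f _
    funext i
    simp
  · intro s _
    ext i
    simp

end WeightCount

theorem sum_choose_central_window {m x : ℕ} (hmx : m < x) (hx : x ≤ 2 * m + 1) :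
    ∑ k ∈ range (2 * m + 1) with k < x ∧ 2 * m - k < x, (2 * m).choose k =
      (2 * m).choose m + 2 * ∑ k ∈ Icc (m + 1) (x - 1), (2 * m).choose k := by
  have hwindow : {k ∈ range (2 * m + 1) | k < x ∧ 2 * m - k < x} = Ico (2 * m + 1 - x) x := by
    ext k
    simp only [mem_filter, mem_range, mem_Ico]
    omega
  have hlower : ∑ k ∈ Ico (2 * m + 1 - x) (m + 1), (2 * m).choose k =
      ∑ k ∈ Ico m x, (2 * m).choose k :=
    calc _ = ∑ k ∈ Ico (2 * m + 1 - x) (2 * m + 1 - m), (2 * m).choose k := by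
          rw [show 2 * m + 1 - m = m + 1 by omega]
      _ = ∑ k ∈ Ico m x, (2 * m).choose (2 * m - k) := (sum_Ico_reflect _ m hx).symm
      _ = ∑ k ∈ Ico m x, (2 * m).choose k :=
          sum_congr rfl fun k hk => Nat.choose_symm (by rw [mem_Ico] at hk; omega)
  rw [hwindow, ← sum_Ico_consecutive _ (show 2 * m + 1 - x ≤ m + 1 by omega) hmx, hlower,
    sum_eq_sum_Ico_succ_bot hmx, ← Ico_add_one_right_eq_Icc,
    Nat.sub_add_cancel (by omega : 1 ≤ x)]
  ring

theorem pr_eq_zero_of_forall_not {m n : ℕ} (P : Ω m n → Prop) [DecidablePred P]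
    (h : ∀ ℓ, ¬ P ℓ) : Pr m n P = 0 := by
  simp [Pr, h]

theorem pr_eq_one_of_forall {m n : ℕ} (P : Ω m n → Prop) [DecidablePred P]
    (h : ∀ ℓ, P ℓ) : Pr m n P = 1 := by
  simp [Pr, h]

theorem pathLabels_one {N : ℕ} (g : Fin N → Bool) (p : List Bool) :
    pathLabels 1 g p = [sub g 1] := by
  simp [pathLabels, heapIdx]

section DepthOne

variable {m : ℕ}

def childLabel (ℓ : Ω m 1) (i : Fin (2 * m)) : Bool := ℓ.2 i ⟨0, Nat.one_pos⟩

def childCount (ℓ : Ω m 1) (b : Bool) : ℕ := #{i | childLabel ℓ i = b}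

theorem occ_ofFn_depth_one (ℓ : Ω m 1) (t : Fin 2 → Bool) :
    occ ℓ (List.ofFn t) = if ℓ.1 = t 0 then childCount ℓ (t 1) else 0 := by
  have hsub (i : Fin (2 * m)) : sub (ℓ.2 i) 1 = childLabel ℓ i := rfl
  simp only [List.ofFn_succ, List.ofFn_zero, occ, pathLabels_one, hsub, List.cons.injEq, and_true]
  rw [childCount, card_filter]
  simp

theorem childCount_true_add_false (ℓ : Ω m 1) :
    childCount ℓ true + childCount ℓ false = 2 * m := by
  simpa [childCount] using
    card_filter_add_card_filter_not (s := univ) fun i => childLabel ℓ i = true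

theorem childCount_le_mval (ℓ : Ω m 1) (b : Bool) : childCount ℓ b ≤ Mval ℓ := by
  have hocc : occ ℓ (List.ofFn ![ℓ.1, b]) = childCount ℓ b := by rw [occ_ofFn_depth_one]; simp
  exact hocc ▸ le_sup (f := fun t : Fin 2 → Bool => occ ℓ (List.ofFn t)) (mem_univ _)

theorem mval_depth_one (ℓ : Ω m 1) :
    Mval ℓ = max (childCount ℓ true) (childCount ℓ false) := by
  refine le_antisymm (Finset.sup_le fun t _ => ?_) ?_
  · rw [occ_ofFn_depth_one]
    split_ifs
    · cases t 1 <;> simp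
    · exact Nat.zero_le _
  · exact max_le (childCount_le_mval ℓ _) (childCount_le_mval ℓ _)

theorem le_mval_depth_one (ℓ : Ω m 1) : m ≤ Mval ℓ := by
  have := childCount_true_add_false ℓ
  rw [mval_depth_one]
  omega

theorem mval_depth_one_le (ℓ : Ω m 1) : Mval ℓ ≤ 2 * m := by
  have := childCount_true_add_false ℓ
  rw [mval_depth_one]
  omega

theorem mval_depth_one_lt_iff (ℓ : Ω m 1) (x : ℕ) :
    Mval ℓ < x ↔ childCount ℓ true < x ∧ 2 * m - childCount ℓ true < x := by
  have := childCount_true_add_false ℓ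
  rw [mval_depth_one, max_lt_iff]
  omega

variable (m)

def labelingEquiv : Ω m 1 ≃ Bool × (Fin (2 * m) → Bool) where
  toFun ℓ := (ℓ.1, childLabel ℓ)
  invFun p := (p.1, fun i _ => p.2 i)
  left_inv ℓ := Prod.ext rfl <| funext fun i => funext fun _ =>
    congrArg (ℓ.2 i) (Subsingleton.elim (α := Fin 1) _ _)
  right_inv _ := rfl

theorem card_labelings_depth_one : Fintype.card (Ω m 1) = 2 * 2 ^ (2 * m) := by
  rw [Fintype.card_congr (labelingEquiv m), Fintype.card_prod, Fintype.card_bool,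
    Fintype.card_fun, Fintype.card_bool, Fintype.card_fin]

theorem card_filter_childCount_true (Q : ℕ → Prop) [DecidablePred Q] :
    #{ℓ : Ω m 1 | Q (childCount ℓ true)} =
      2 * ∑ k ∈ range (2 * m + 1) with Q k, (2 * m).choose k := by
  have hmem (ℓ : Ω m 1) : ℓ ∈ ({ℓ | Q (childCount ℓ true)} : Finset _) ↔
      labelingEquiv m ℓ ∈
        univ ×ˢ ({f | Q #{i | f i = true}} : Finset (Fin (2 * m) → Bool)) := by
    simp [labelingEquiv]; rfl
  rw [card_equiv _ hmem, card_product, card_univ, Fintype.card_bool,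
    card_filter_card_true_eq_sum_choose, Fintype.card_fin]

theorem pr_mval_depth_one_lt (x : ℕ) :
    Pr m 1 (fun ℓ => Mval ℓ < x) =
      (∑ k ∈ range (2 * m + 1) with k < x ∧ 2 * m - k < x, ((2 * m).choose k : ℚ)) /
        2 ^ (2 * m) := by
  rw [Pr, filter_congr fun ℓ _ => mval_depth_one_lt_iff ℓ x,
    card_filter_childCount_true m (fun k => k < x ∧ 2 * m - k < x), card_labelings_depth_one]
  push_cast
  exact mul_div_mul_left _ _ two_ne_zero

end DepthOne

theorem pr_mval_lt_depth_one_general (m : ℕ) (x : ℕ) :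
    (x ≤ m → Pr m 1 (fun ℓ => Mval ℓ < x) = 0) ∧
    (m < x → x ≤ 2 * m + 1 →
      Pr m 1 (fun ℓ => Mval ℓ < x) =
        ((Nat.choose (2 * m) m : ℚ) +
          2 * ∑ i ∈ Finset.Icc (m + 1) (x - 1), (Nat.choose (2 * m) i : ℚ)) /
        2 ^ (2 * m)) ∧
    (2 * m + 1 < x → Pr m 1 (fun ℓ => Mval ℓ < x) = 1) := by
  refine ⟨fun hx => ?_, fun hmx hx => ?_, fun hx => ?_⟩
  · exact pr_eq_zero_of_forall_not _ fun ℓ => not_lt.2 (hx.trans (le_mval_depth_one ℓ))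
  · rw [pr_mval_depth_one_lt]
    congr 1
    exact_mod_cast sum_choose_central_window hmx hx
  · exact pr_eq_one_of_forall _ fun ℓ => (mval_depth_one_le ℓ).trans_lt (by omega)

/-- let `m ≥ 1` and consider the uniform distribution over
`{0,1}`-labelings of `T^m_1`.  Then for every integer `x`:
`Pr(M^m_1 < x) = 0` if `x ≤ m`;
`Pr(M^m_1 < x) = (C(2m, m) + 2 ∑_{i=m+1}^{x-1} C(2m, i)) / 2^{2m}` if
`m < x ≤ 2m + 1`; and `Pr(M^m_1 < x) = 1` if `x > 2m + 1`. -/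
theorem pr_mval_lt_depth_one (m : ℕ) (hm : 1 ≤ m) (x : ℕ) :
    (x ≤ m → Pr m 1 (fun ℓ => Mval ℓ < x) = 0) ∧
    (m < x → x ≤ 2 * m + 1 →
      Pr m 1 (fun ℓ => Mval ℓ < x) =
        ((Nat.choose (2 * m) m : ℚ) +
          2 * ∑ i ∈ Finset.Icc (m + 1) (x - 1), (Nat.choose (2 * m) i : ℚ)) /
        2 ^ (2 * m)) ∧
    (2 * m + 1 < x → Pr m 1 (fun ℓ => Mval ℓ < x) = 1) :=
  pr_mval_lt_depth_one_general m x

end TreeDB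
end
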